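/- For the two-mode n-photon case, the traceless tangent invariant I_{t'}(ρ) = Σ_{i=1}^{3} tr(ρ H_i)² satisfies 0 ≤ I_{t'}(ρ) ≤ 3n/((n+1)(n+2)) for every n-photon two-mode density matrix ρ, with the maximum attained by ρ = |n,0⟩⟨n,0| and the minimum by the maximally mixed state I(M)/M. -/

import Mathlib

open Matrix
open scoped ComplexOrder

/-- The `n`-photon `m`-mode Fock basis: tuples of occupation numbers summing to `n`. -/
abbrev FockT (m n : ℕ) := {f : Fin m → ℕ // ∑ i, f i = n}

instance (m n : ℕ) : Fintype (FockT m n) :=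
  Fintype.subtype (Finset.Nat.antidiagonalTuple m n) fun _ =>
    Finset.Nat.mem_antidiagonalTuple

/-- Matrix element `⟨B| a_k† a_l |A⟩` on Fock states. -/
noncomputable def ampl {m : ℕ} (A B : Fin m → ℕ) (k l : Fin m) : ℝ :=
  if 1 ≤ A l ∧ B = Function.update (Function.update A l (A l - 1)) k
      ((Function.update A l (A l - 1)) k + 1)
  then Real.sqrt (A l) * Real.sqrt ((Function.update A l (A l - 1)) k + 1) else 0

/-- The Jordan–Schwinger image `Σ_{k,l} h_{kl} a_k† a_l` on the `n`-photon sector. -/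
noncomputable def JS {m : ℕ} (n : ℕ) (h : Matrix (Fin m) (Fin m) ℂ) :
    Matrix (FockT m n) (FockT m n) ℂ :=
  Matrix.of fun B A => ∑ k, ∑ l, h k l * (ampl A.1 B.1 k l : ℝ)

/-- The two-mode generators `(n̂_1-n̂_2)/√2`, `(a_1†a_2+a_2†a_1)/√2`,
`i(a_1†a_2-a_2†a_1)/√2` (normalized Pauli matrices). -/
noncomputable def pauli2 : Fin 3 → Matrix (Fin 2) (Fin 2) ℂ
  | 0 => ((Real.sqrt 2)⁻¹ : ℂ) • Matrix.diagonal ![1, -1]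
  | 1 => ((Real.sqrt 2)⁻¹ : ℂ) • (single 0 1 1 + single 1 0 1)
  | 2 => (Complex.I * ((Real.sqrt 2)⁻¹ : ℂ)) •
      (single 0 1 1 - single 1 0 1)

/-- The traceless tangent basis `H_1, H_2, H_3` for two modes and `n` photons:
the Fock representations of the normalized Paulis divided by `√(binom (n+2) 3)`. -/
noncomputable def Htan2 (n : ℕ) (i : Fin 3) :
    Matrix (FockT 2 n) (FockT 2 n) ℂ :=
  (((Real.sqrt ((n + 2).choose 3))⁻¹ : ℝ) : ℂ) • JS n (pauli2 i)

/-- The traceless tangent invariant `I_{t'}(ρ) = Σ_{i=1}^{3} tr(ρ H_i)²`. -/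
noncomputable def Itp2 (n : ℕ) (ρ : Matrix (FockT 2 n) (FockT 2 n) ℂ) : ℝ :=
  ∑ i : Fin 3, (((ρ * Htan2 n i).trace).re) ^ 2

/-!
Everything is controlled by the one-body reduced density matrix `R k l = tr(ρ a_l† a_k)`,
which is positive semidefinite of trace `n` for an `n`-photon density matrix. Writing
`C = binom(n+2, 3)`, `tr(ρ H_i) = tr(σ_i R) / √C` for the normalized Paulis `σ_i`, so
`I_{t'}(ρ) = ((R₀₀ - R₁₁)² + 4|R₀₁|²) / (2C) = ((tr R)² - 4 det R) / (2C)`, which is at most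
`n² / (2C) = 3n / ((n+1)(n+2))`. For `|n,0⟩⟨n,0|` one gets `R = diag(n, 0)`, which attains
the bound; the maximally mixed state gives `0` because the `H_i` are traceless.
-/

section Update

variable {ι : Type*} [DecidableEq ι]

lemma update_pred_eq_iff {E F : ι → ℕ} {k : ι} (hE : 1 ≤ E k) :
    Function.update E k (E k - 1) = F ↔ E = Function.update F k (F k + 1) := by
  constructor
  · rintro rfl
    rw [Function.update_self, Function.update_idem, Nat.sub_add_cancel hE, Function.update_eq_self]
  · rintro rfl
    simp

lemma sum_update_pred [Fintype ι] {D : ι → ℕ} {j : ι} (hD : 1 ≤ D j) :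
    ∑ i, Function.update D j (D j - 1) i = ∑ i, D i - 1 := by
  rw [Finset.sum_update_of_mem (Finset.mem_univ j), Finset.sdiff_singleton_eq_erase,
    ← Finset.add_sum_erase _ _ (Finset.mem_univ j)]
  omega

end Update

lemma Matrix.PosSemidef.sq_sub_re_add_four_normSq_le {R : Matrix (Fin 2) (Fin 2) ℂ}
    (hR : R.PosSemidef) :
    ((R 0 0).re - (R 1 1).re) ^ 2 + 4 * Complex.normSq (R 0 1) ≤ R.trace.re ^ 2 := by
  have him (i : Fin 2) : (R i i).im = 0 := Complex.conj_eq_iff_im.mp (hR.1.apply i i)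
  have hdet := (Complex.nonneg_iff.mp hR.det_nonneg).1
  rw [det_fin_two, ← hR.1.apply 1 0, RCLike.star_def, Complex.mul_conj, Complex.sub_re,
    Complex.mul_re, him 0, him 1, Complex.ofReal_re] at hdet
  rw [trace_fin_two, Complex.add_re]
  nlinarith

lemma sq_div_two_mul_choose_three (n : ℕ) :
    (n : ℝ) ^ 2 / (2 * (n + 2).choose 3) = 3 * n / ((n + 1) * (n + 2)) := by
  have h : (((n + 2).choose 3 : ℕ) : ℝ) * 6 = n * (n + 1) * (n + 2) := by
    have := Nat.descFactorial_eq_factorial_mul_choose (n + 2) 3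
    simp only [Nat.descFactorial_succ, Nat.descFactorial_zero, add_tsub_cancel_right,
      Nat.add_one_sub_one, tsub_zero, mul_one, Nat.factorial, Nat.succ_eq_add_one, Nat.reduceAdd,
      zero_add, Nat.reduceMul] at this
    exact_mod_cast by linarith
  rcases Nat.eq_zero_or_pos n with rfl | hn
  · simp
  · have : (((n + 2).choose 3 : ℕ) : ℝ) ≠ 0 := by
      exact_mod_cast (Nat.choose_pos (by omega)).ne'
    field_simp
    linear_combination (-1) * h

namespace Fock

variable {m n : ℕ}

lemma ampl_self_of_ne (A : Fin m → ℕ) {k l : Fin m} (hkl : k ≠ l) : ampl A A k l = 0 := by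
  rw [ampl, if_neg]
  rintro ⟨hA, hAA⟩
  have := congrFun hAA l
  rw [Function.update_of_ne hkl.symm, Function.update_self] at this
  omega

lemma ampl_same_mode (A B : Fin m → ℕ) (k : Fin m) :
    ampl A B k k = if B = A then (A k : ℝ) else 0 := by
  rw [ampl, Function.update_self, Function.update_idem]
  rcases Nat.eq_zero_or_pos (A k) with hk | hk
  · simp [hk]
  · rw [Nat.sub_add_cancel hk, Function.update_eq_self]
    split_ifs <;> simp_all [Real.mul_self_sqrt]

lemma ampl_self (A : Fin m → ℕ) (k l : Fin m) :
    ampl A A k l = if k = l then (A k : ℝ) else 0 := by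
  split_ifs with hkl
  · rw [hkl, ampl_same_mode, if_pos rfl]
  · exact ampl_self_of_ne A hkl

-- For `n = 0` the target sector `n - 1` is truncated to `0`; harmless, as the matrix is then zero.
noncomputable def annihilation (n : ℕ) (l : Fin m) : Matrix (FockT m (n - 1)) (FockT m n) ℂ :=
  of fun C A =>
    if 1 ≤ A.1 l ∧ C.1 = Function.update A.1 l (A.1 l - 1) then (√(A.1 l : ℝ) : ℂ) else 0

def removePhoton (A : FockT m n) (l : Fin m) (hA : 1 ≤ A.1 l) : FockT m (n - 1) :=
  ⟨Function.update A.1 l (A.1 l - 1), by rw [sum_update_pred hA, A.2]⟩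

lemma conjTranspose_annihilation_mul_annihilation (k l : Fin m) (B A : FockT m n) :
    ((annihilation n k)ᴴ * annihilation n l) B A = ampl A.1 B.1 k l := by
  by_cases hB : 1 ≤ B.1 k
  · rw [mul_apply, Fintype.sum_eq_single (removePhoton B k hB)]
    · simp only [conjTranspose_apply, annihilation, of_apply, removePhoton, hB, true_and, if_true,
        update_pred_eq_iff hB, ampl]
      split_ifs with h
      · rw [h.2, Function.update_self]
        simp [mul_comm]
      · simp
    · intro C hC
      rw [conjTranspose_apply, annihilation, of_apply, if_neg (fun h => hC (Subtype.ext h.2)),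
        star_zero, zero_mul]
  · have hampl : ampl A.1 B.1 k l = 0 := by
      rw [ampl, if_neg]
      rintro ⟨-, hBA⟩
      rw [hBA, Function.update_self] at hB
      omega
    rw [hampl, mul_apply, Complex.ofReal_zero]
    refine Finset.sum_eq_zero fun C _ => ?_
    rw [conjTranspose_apply, annihilation, of_apply, if_neg (fun h => hB h.1), star_zero, zero_mul]

lemma sum_conjTranspose_annihilation_mul_self :
    ∑ k, (annihilation n k)ᴴ * annihilation (m := m) n k = (n : ℂ) • 1 := by
  ext B A
  simp only [Matrix.sum_apply, conjTranspose_annihilation_mul_annihilation, ampl_same_mode,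
    Matrix.smul_apply, one_apply, smul_eq_mul, Subtype.coe_inj]
  split_ifs with h
  · subst h
    simp only [mul_one, ← Complex.ofReal_natCast, ← Complex.ofReal_sum, ← Nat.cast_sum, B.2]
  · simp

lemma JS_eq_sum (h : Matrix (Fin m) (Fin m) ℂ) :
    JS n h = ∑ k, ∑ l, h k l • ((annihilation n k)ᴴ * annihilation n l) := by
  ext B A
  simp [JS, Matrix.sum_apply, conjTranspose_annihilation_mul_annihilation]

noncomputable def oneBodyDensity (n : ℕ) (ρ : Matrix (FockT m n) (FockT m n) ℂ) :
    Matrix (Fin m) (Fin m) ℂ :=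
  of fun k l => (ρ * ((annihilation n l)ᴴ * annihilation n k)).trace

lemma trace_mul_JS (ρ : Matrix (FockT m n) (FockT m n) ℂ) (h : Matrix (Fin m) (Fin m) ℂ) :
    (ρ * JS n h).trace = (h * oneBodyDensity n ρ).trace := by
  simp only [JS_eq_sum, Matrix.mul_sum, trace_sum, Matrix.mul_smul, trace_smul, smul_eq_mul]
  simp only [trace, diag_apply, mul_apply (M := h), oneBodyDensity, of_apply]

lemma trace_oneBodyDensity (ρ : Matrix (FockT m n) (FockT m n) ℂ) :
    (oneBodyDensity n ρ).trace = n * ρ.trace := by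
  change ∑ k, (ρ * ((annihilation n k)ᴴ * annihilation n k)).trace = _
  rw [← trace_sum, ← Matrix.mul_sum, sum_conjTranspose_annihilation_mul_self, Matrix.mul_smul,
    Matrix.mul_one, trace_smul, smul_eq_mul]

lemma oneBodyDensity_isHermitian {ρ : Matrix (FockT m n) (FockT m n) ℂ} (hρ : ρ.IsHermitian) :
    (oneBodyDensity n ρ).IsHermitian := by
  ext k l
  rw [conjTranspose_apply, oneBodyDensity, of_apply, of_apply, ← trace_conjTranspose,
    conjTranspose_mul, conjTranspose_mul, conjTranspose_conjTranspose, hρ.eq, trace_mul_comm]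

lemma oneBodyDensity_posSemidef {ρ : Matrix (FockT m n) (FockT m n) ℂ} (hρ : ρ.PosSemidef) :
    (oneBodyDensity n ρ).PosSemidef := by
  refine .of_dotProduct_mulVec_nonneg (oneBodyDensity_isHermitian hρ.1) fun x => ?_
  set A := ∑ k, star (x k) • annihilation n k
  have hx : star x ⬝ᵥ oneBodyDensity n ρ *ᵥ x = (A * ρ * Aᴴ).trace := by
    rw [trace_mul_cycle, ← trace_mul_comm]
    simp only [A, conjTranspose_sum, conjTranspose_smul, star_star, Matrix.sum_mul, Matrix.mul_sum,
      Matrix.smul_mul, Matrix.mul_smul, trace_sum, trace_smul, smul_eq_mul, dotProduct, mulVec,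
      oneBodyDensity, of_apply, Pi.star_apply, Finset.mul_sum]
    exact Finset.sum_congr rfl fun _ _ => Finset.sum_congr rfl fun _ _ => by ring
  rw [hx]
  exact (hρ.mul_mul_conjTranspose_same A).trace_nonneg

lemma oneBodyDensity_diagonal (d : FockT m n → ℂ) :
    oneBodyDensity n (diagonal d) = diagonal fun k => ∑ A, d A * (A.1 k : ℂ) := by
  ext k l
  rw [oneBodyDensity, of_apply, trace, diagonal_apply]
  simp only [diag_apply, diagonal_mul, conjTranspose_annihilation_mul_annihilation, ampl_self,
    eq_comm (a := l)]
  split_ifs with h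
  · simp [h]
  · simp

lemma sum_occupation_eq (k l : Fin m) :
    ∑ A : FockT m n, (A.1 k : ℂ) = ∑ A : FockT m n, (A.1 l : ℂ) :=
  Fintype.sum_equiv (((Equiv.swap k l).arrowCongr (Equiv.refl ℕ)).subtypeEquiv fun A => by
      simp [Equiv.sum_comp]) _ _ fun A => by simp

lemma trace_JS (h : Matrix (Fin m) (Fin m) ℂ) (k : Fin m) :
    (JS n h).trace = h.trace * ∑ A : FockT m n, (A.1 k : ℂ) := by
  rw [← Matrix.one_mul (JS n h), trace_mul_JS, ← diagonal_one, oneBodyDensity_diagonal]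
  simp_rw [one_mul, sum_occupation_eq _ k]
  rw [← smul_one_eq_diagonal, Matrix.mul_smul, Matrix.mul_one, trace_smul, smul_eq_mul, mul_comm]

lemma trace_mul_Htan2 (ρ : Matrix (FockT 2 n) (FockT 2 n) ℂ) (i : Fin 3) :
    (ρ * Htan2 n i).trace =
      ((√((n + 2).choose 3 : ℝ))⁻¹ : ℝ) * (pauli2 i * oneBodyDensity n ρ).trace := by
  rw [Htan2, Matrix.mul_smul, trace_smul, trace_mul_JS, smul_eq_mul]

lemma re_trace_pauli2_mul {R : Matrix (Fin 2) (Fin 2) ℂ} (hR : R.IsHermitian) (i : Fin 3) :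
    (pauli2 i * R).trace.re =
      ![(R 0 0).re - (R 1 1).re, 2 * (R 0 1).re, 2 * (R 0 1).im] i / √2 := by
  have h10 : R 1 0 = star (R 0 1) := (hR.apply 1 0).symm
  fin_cases i <;> simp [pauli2, trace_fin_two, mul_apply, h10] <;> field_simp <;>
    rw [Real.sq_sqrt zero_le_two] <;> ring

lemma Itp2_eq {ρ : Matrix (FockT 2 n) (FockT 2 n) ℂ} (hR : (oneBodyDensity n ρ).IsHermitian) :
    Itp2 n ρ = (((oneBodyDensity n ρ 0 0).re - (oneBodyDensity n ρ 1 1).re) ^ 2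
      + 4 * Complex.normSq (oneBodyDensity n ρ 0 1)) / (2 * (n + 2).choose 3) := by
  simp only [Itp2, Fin.sum_univ_three, trace_mul_Htan2, Complex.re_ofReal_mul,
    re_trace_pauli2_mul hR, cons_val_zero, cons_val_one, cons_val_two, head_cons, tail_cons,
    mul_pow, div_pow, inv_pow, Real.sq_sqrt (Nat.cast_nonneg _), Real.sq_sqrt zero_le_two,
    Complex.normSq_apply]
  ring

lemma trace_Htan2 (i : Fin 3) : (Htan2 n i).trace = 0 := by
  rw [Htan2, trace_smul, trace_JS _ 0]
  fin_cases i <;> simp [pauli2]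

lemma Itp2_smul_one (c : ℂ) : Itp2 n (c • 1) = 0 := by
  simp [Itp2, trace_Htan2]

lemma Itp2_le {ρ : Matrix (FockT 2 n) (FockT 2 n) ℂ} (hρ : ρ.PosSemidef) (htr : ρ.trace = 1) :
    Itp2 n ρ ≤ 3 * n / ((n + 1) * (n + 2)) := by
  have hR := oneBodyDensity_posSemidef hρ
  have htrR : (oneBodyDensity n ρ).trace.re = n := by simp [trace_oneBodyDensity, htr]
  rw [Itp2_eq hR.1, ← sq_div_two_mul_choose_three, ← htrR]
  gcongr
  exact hR.sq_sub_re_add_four_normSq_le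

lemma Itp2_single (v : FockT 2 n) :
    Itp2 n (single v v 1) = ((v.1 0 : ℝ) - v.1 1) ^ 2 / (2 * (n + 2).choose 3) := by
  have hR : oneBodyDensity n (single v v 1) = diagonal fun k => (v.1 k : ℂ) := by
    rw [← diagonal_single, oneBodyDensity_diagonal]
    simp [Pi.single_apply]
  rw [Itp2_eq (hR ▸ isHermitian_diagonal_of_self_adjoint _ (by ext; simp)), hR]
  simp

end Fock

/-- For two modes and `n` photons, `0 ≤ I_{t'}(ρ) ≤ 3n/((n+1)(n+2))` for every
density matrix `ρ`, with the maximum attained at `|n,0⟩⟨n,0|` and the minimum at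
the maximally mixed state `I(M)/M`. -/
theorem stmt16 (n : ℕ) :
    (∀ ρ : Matrix (FockT 2 n) (FockT 2 n) ℂ, ρ.PosSemidef → ρ.trace = 1 →
      0 ≤ Itp2 n ρ ∧ Itp2 n ρ ≤ 3 * n / ((n + 1) * (n + 2))) ∧
    Itp2 n (Matrix.single
        (⟨fun i => if i = 0 then n else 0, by simp⟩ : FockT 2 n)
        (⟨fun i => if i = 0 then n else 0, by simp⟩ : FockT 2 n) 1) =
      3 * n / ((n + 1) * (n + 2)) ∧
    Itp2 n (((Fintype.card (FockT 2 n) : ℂ))⁻¹ • 1) = 0 := by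
  refine ⟨fun ρ hρ htr => ⟨by unfold Itp2; positivity, Fock.Itp2_le hρ htr⟩, ?_,
    Fock.Itp2_smul_one _⟩
  rw [Fock.Itp2_single, ← sq_div_two_mul_choose_three]
  simp
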